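/- Let (Ω, F, P) be a probability space, d ≥ 1, and let X : [0,1] × Ω → ℝ^d (written X_t) be a stochastic process all of whose sample paths t ↦ X_t(ω) are continuously differentiable, with pathwise derivative Ẋ_t. Assume there is an integrable random variable Z with sup_{t ∈ [0,1]} ‖Ẋ_t‖ ≤ Z almost surely. For each t, let v_t : ℝ^d → ℝ^d be a Borel measurable map such that v_t(X_t) is a version of the conditional expectation E[Ẋ_t | σ(X_t)]. Then for every smooth compactly supported function φ : ℝ^d → ℝ, the map t ↦ E[φ(X_t)] is differentiable on [0,1] and (d/dt) E[φ(X_t)] = E[∇φ(X_t) · Ẋ_t] = E[∇φ(X_t) · v_t(X_t)]. -/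

import Mathlib

open Set MeasureTheory

/-- (Weak form of the continuity equation.) If `X` is a process with C¹ sample
paths, pathwise derivative `Ẋ` dominated uniformly in time by an integrable `Z`, and `v t` is a
Borel map with `v t (X t)` a version of `E[Ẋ t | σ(X t)]`, then for every smooth compactly
supported `φ : ℝ^d → ℝ` the map `t ↦ E[φ(X t)]` is differentiable on `[0,1]` with derivative
`E[∇φ(X t)·Ẋ t] = E[∇φ(X t)·v t (X t)]`. -/
theorem weak_continuity_equation
    {Ω : Type*} [MeasurableSpace Ω] (P : Measure Ω) [IsProbabilityMeasure P]
    (d : ℕ) (hd : 1 ≤ d)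
    (X X' : ℝ → Ω → EuclideanSpace ℝ (Fin d))
    (hXmeas : ∀ t, Measurable (X t))
    (hX'meas : ∀ t, Measurable (X' t))
    (hderiv : ∀ ω, ∀ t ∈ Icc (0:ℝ) 1,
        HasDerivWithinAt (fun s => X s ω) (X' t ω) (Icc (0:ℝ) 1) t)
    (hcont : ∀ ω, ContinuousOn (fun t => X' t ω) (Icc (0:ℝ) 1))
    (Z : Ω → ℝ) (hZint : Integrable Z P)
    (hdom : ∀ᵐ ω ∂P, ∀ t ∈ Icc (0:ℝ) 1, ‖X' t ω‖ ≤ Z ω)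
    (v : ℝ → EuclideanSpace ℝ (Fin d) → EuclideanSpace ℝ (Fin d))
    (hvmeas : ∀ t ∈ Icc (0:ℝ) 1, Measurable (v t))
    (hv : ∀ t ∈ Icc (0:ℝ) 1,
        (fun ω => v t (X t ω))
          =ᵐ[P] P[(fun ω => X' t ω) | MeasurableSpace.comap (X t) inferInstance]) :
    ∀ φ : EuclideanSpace ℝ (Fin d) → ℝ, ContDiff ℝ (⊤ : ℕ∞) φ → HasCompactSupport φ →
      ∀ t ∈ Icc (0:ℝ) 1,
        HasDerivWithinAt (fun s => ∫ ω, φ (X s ω) ∂P)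
            (∫ ω, fderiv ℝ φ (X t ω) (X' t ω) ∂P) (Icc (0:ℝ) 1) t
        ∧ ∫ ω, fderiv ℝ φ (X t ω) (X' t ω) ∂P
            = ∫ ω, fderiv ℝ φ (X t ω) (v t (X t ω)) ∂P := by
  intro φ hφ hφc t ht
  -- basic bounds on φ and its derivative
  obtain ⟨C, hC⟩ : ∃ C, ∀ x, ‖fderiv ℝ φ x‖ ≤ C :=
    (hφc.fderiv (𝕜 := ℝ)).exists_bound_of_continuous (hφ.continuous_fderiv (by simp))
  have hC0 : (0:ℝ) ≤ C := le_trans (norm_nonneg _) (hC 0)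
  obtain ⟨Cφ, hCφ⟩ : ∃ C, ∀ x, ‖φ x‖ ≤ C :=
    hφc.exists_bound_of_continuous hφ.continuous
  -- integrability of φ ∘ X s
  have hint : ∀ s, Integrable (fun ω => φ (X s ω)) P := fun s =>
    (integrable_const Cφ).mono'
      (hφ.continuous.measurable.comp (hXmeas s)).aestronglyMeasurable
      (Filter.Eventually.of_forall fun ω => hCφ _)
  -- chain rule along sample paths
  have hψ : ∀ ω, ∀ s ∈ Icc (0:ℝ) 1,
      HasDerivWithinAt (fun u => φ (X u ω)) (fderiv ℝ φ (X s ω) (X' s ω))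
        (Icc (0:ℝ) 1) s := fun ω s hs =>
    ((hφ.differentiable (by simp) (X s ω)).hasFDerivAt).comp_hasDerivWithinAt s (hderiv ω s hs)
  -- measurability of the derivative integrand
  have hGmeas : ∀ s, Measurable fun ω => fderiv ℝ φ (X s ω) (X' s ω) := by
    intro s
    have hc : Continuous fun p : EuclideanSpace ℝ (Fin d) × EuclideanSpace ℝ (Fin d) => fderiv ℝ φ p.1 p.2 :=
      ((hφ.continuous_fderiv (by simp)).comp continuous_fst).clm_apply continuous_snd
    exact hc.measurable.comp ((hXmeas s).prodMk (hX'meas s))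
  -- integrability of X' t and of the derivative integrand
  have hX'int : Integrable (X' t) P :=
    hZint.mono' (hX'meas t).aestronglyMeasurable (hdom.mono fun ω h => h t ht)
  have hGbound : ∀ᵐ ω ∂P, ∀ s ∈ Icc (0:ℝ) 1,
      ‖fderiv ℝ φ (X s ω) (X' s ω)‖ ≤ C * Z ω := by
    filter_upwards [hdom] with ω hω
    intro s hs
    calc ‖fderiv ℝ φ (X s ω) (X' s ω)‖ ≤ ‖fderiv ℝ φ (X s ω)‖ * ‖X' s ω‖ :=
          (fderiv ℝ φ (X s ω)).le_opNorm _
      _ ≤ C * Z ω := mul_le_mul (hC _) (hω s hs) (norm_nonneg _) hC0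
  have hGint : Integrable (fun ω => fderiv ℝ φ (X t ω) (X' t ω)) P :=
    (hZint.const_mul C).mono' (hGmeas t).aestronglyMeasurable
      (hGbound.mono fun ω h => h t ht)
  -- Part 1: differentiation under the integral via dominated convergence of slopes
  have key : Filter.Tendsto (fun s => ∫ ω, slope (fun u => φ (X u ω)) t s ∂P)
      (nhdsWithin t (Icc (0:ℝ) 1 \ {t}))
      (nhds (∫ ω, fderiv ℝ φ (X t ω) (X' t ω) ∂P)) := by
    apply tendsto_integral_filter_of_dominated_convergence (fun ω => C * Z ω)
    · refine Filter.Eventually.of_forall fun s => ?_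
      have : Measurable fun ω => slope (fun u => φ (X u ω)) t s := by
        simp only [slope_def_field]
        exact ((hφ.continuous.measurable.comp (hXmeas s)).sub
          (hφ.continuous.measurable.comp (hXmeas t))).div_const _
      exact this.aestronglyMeasurable
    · filter_upwards [self_mem_nhdsWithin] with s hs
      obtain ⟨hs1, hs2⟩ := hs
      filter_upwards [hdom, hGbound] with ω hω hGω
      have hmvt : ‖φ (X s ω) - φ (X t ω)‖ ≤ (C * Z ω) * ‖s - t‖ :=
        (convex_Icc (0:ℝ) 1).norm_image_sub_le_of_norm_hasDerivWithin_le
          (fun u hu => hψ ω u hu) (fun u hu => hGω u hu) ht hs1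
      have hst : s - t ≠ 0 := sub_ne_zero.mpr (by simpa using hs2)
      have hZω : (0:ℝ) ≤ Z ω := le_trans (norm_nonneg _) (hω t ht)
      rw [slope_def_field]
      rw [div_eq_inv_mul, norm_mul, norm_inv]
      rw [inv_mul_le_iff₀ (norm_pos_iff.mpr hst)]
      calc ‖φ (X s ω) - φ (X t ω)‖ ≤ (C * Z ω) * ‖s - t‖ := hmvt
        _ = ‖s - t‖ * (C * Z ω) := by ring
    · exact hZint.const_mul C
    · exact Filter.Eventually.of_forall fun ω =>
        hasDerivWithinAt_iff_tendsto_slope.mp (hψ ω t ht)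
  have hslope_eq : ∀ s, slope (fun u => ∫ ω, φ (X u ω) ∂P) t s
      = ∫ ω, slope (fun u => φ (X u ω)) t s ∂P := by
    intro s
    simp only [slope_def_field]
    rw [← integral_sub (hint s) (hint t), ← integral_div]
  have h1 : HasDerivWithinAt (fun s => ∫ ω, φ (X s ω) ∂P)
      (∫ ω, fderiv ℝ φ (X t ω) (X' t ω) ∂P) (Icc (0:ℝ) 1) t := by
    rw [hasDerivWithinAt_iff_tendsto_slope]
    exact key.congr fun s => (hslope_eq s).symm
  refine ⟨h1, ?_⟩
  -- Part 2: replacing X' t by its conditional expectation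
  have hm : MeasurableSpace.comap (X t) inferInstance ≤ (inferInstance : MeasurableSpace Ω) :=
    (hXmeas t).comap_le
  haveI : SigmaFinite (P.trim hm) := by
    haveI := isFiniteMeasure_trim (μ := P) hm
    infer_instance
  have hXm : Measurable[MeasurableSpace.comap (X t) inferInstance] (X t) :=
    measurable_iff_comap_le.mpr le_rfl
  have hCint : Integrable (fun ω => v t (X t ω)) P :=
    integrable_condExp.congr (hv t ht).symm
  set e : Fin d → EuclideanSpace ℝ (Fin d) := fun i => EuclideanSpace.single i 1 with he
  -- coordinatewise conditional expectation identity
  have hcond_i : ∀ i : Fin d,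
      (fun ω => v t (X t ω) i) =ᵐ[P] P[(fun ω => X' t ω i) | MeasurableSpace.comap (X t) inferInstance] := by
    intro i
    have hWi : Integrable (fun ω => X' t ω i) P := by simpa using ((EuclideanSpace.proj i : EuclideanSpace ℝ (Fin d) →L[ℝ] ℝ).integrable_comp hX'int)
    refine ae_eq_condExp_of_forall_setIntegral_eq hm hWi ?_ ?_ ?_
    · intro s _ _
      have hCi : Integrable (fun ω => v t (X t ω) i) P := by
        simpa using ((EuclideanSpace.proj i : EuclideanSpace ℝ (Fin d) →L[ℝ] ℝ).integrable_comp hCint)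
      exact hCi.integrableOn
    · intro s hs hμs
      have hvec : ∫ ω in s, v t (X t ω) ∂P = ∫ ω in s, X' t ω ∂P := by
        calc ∫ ω in s, v t (X t ω) ∂P
            = ∫ ω in s, (P[(fun ω => X' t ω)| MeasurableSpace.comap (X t) inferInstance]) ω ∂P :=
              integral_congr_ae (ae_restrict_of_ae (hv t ht))
          _ = ∫ ω in s, X' t ω ∂P := setIntegral_condExp hm hX'int hs
      have h2 := ContinuousLinearMap.integral_comp_comm
        (EuclideanSpace.proj i : EuclideanSpace ℝ (Fin d) →L[ℝ] ℝ) (hCint.integrableOn (s := s))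
      have h3 := ContinuousLinearMap.integral_comp_comm
        (EuclideanSpace.proj i : EuclideanSpace ℝ (Fin d) →L[ℝ] ℝ) (hX'int.integrableOn (s := s))
      simp only [PiLp.proj_apply] at h2 h3
      rw [h2, h3, hvec]
    · refine StronglyMeasurable.aestronglyMeasurable ?_
      have : Measurable[MeasurableSpace.comap (X t) inferInstance] fun ω => v t (X t ω) i :=
        (EuclideanSpace.proj i : EuclideanSpace ℝ (Fin d) →L[ℝ] ℝ).continuous.measurable.comp ((hvmeas t ht).comp hXm)
      exact this.stronglyMeasurable
  -- pull-out property coordinatewise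
  have hmul : ∀ i : Fin d,
      ∫ ω, fderiv ℝ φ (X t ω) (e i) * X' t ω i ∂P
        = ∫ ω, fderiv ℝ φ (X t ω) (e i) * v t (X t ω) i ∂P := by
    intro i
    set f : Ω → ℝ := fun ω => fderiv ℝ φ (X t ω) (e i) with hf_def
    have hfm : StronglyMeasurable[MeasurableSpace.comap (X t) inferInstance] f := by
      have hg : Measurable fun x : EuclideanSpace ℝ (Fin d) => fderiv ℝ φ x (e i) :=
        ((hφ.continuous_fderiv (by simp)).clm_apply continuous_const).measurable
      exact (hg.comp hXm).stronglyMeasurable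
    have hfb : ∀ᵐ ω ∂P, ‖f ω‖ ≤ C := by
      refine Filter.Eventually.of_forall fun ω => ?_
      calc ‖f ω‖ ≤ ‖fderiv ℝ φ (X t ω)‖ * ‖e i‖ := (fderiv ℝ φ (X t ω)).le_opNorm _
        _ = ‖fderiv ℝ φ (X t ω)‖ := by
            rw [he]; simp [EuclideanSpace.norm_single]
        _ ≤ C := hC _
    have hWi : Integrable (fun ω => X' t ω i) P := by simpa using ((EuclideanSpace.proj i : EuclideanSpace ℝ (Fin d) →L[ℝ] ℝ).integrable_comp hX'int)
    have hCi : Integrable (fun ω => v t (X t ω) i) P :=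
      by simpa using ((EuclideanSpace.proj i : EuclideanSpace ℝ (Fin d) →L[ℝ] ℝ).integrable_comp hCint)
    have hfW : Integrable (f * fun ω => X' t ω i) P :=
      hWi.bdd_mul (hfm.mono hm).aestronglyMeasurable hfb
    have h1 := condExp_stronglyMeasurable_mul_of_bound hm hfm hWi C hfb
    calc ∫ ω, f ω * X' t ω i ∂P
        = ∫ ω, (P[(f * fun ω => X' t ω i)| MeasurableSpace.comap (X t) inferInstance]) ω ∂P := (integral_condExp hm).symm
      _ = ∫ ω, (f * P[(fun ω => X' t ω i)| MeasurableSpace.comap (X t) inferInstance]) ω ∂P := integral_congr_ae h1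
      _ = ∫ ω, f ω * v t (X t ω) i ∂P := by
          refine integral_congr_ae ?_
          filter_upwards [hcond_i i] with ω hω
          simp [Pi.mul_apply, ← hω]
  -- expand the derivative in coordinates
  have expand : ∀ x y : EuclideanSpace ℝ (Fin d), fderiv ℝ φ x y = ∑ i, fderiv ℝ φ x (e i) * y i := by
    intro x y
    have hy : ∑ i, y i • e i = y := by
      simpa [EuclideanSpace.basisFun_apply, EuclideanSpace.basisFun_repr, he] using
        (EuclideanSpace.basisFun (Fin d) ℝ).sum_repr y
    conv_lhs => rw [← hy]
    rw [map_sum]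
    exact Finset.sum_congr rfl fun i _ => by rw [ContinuousLinearMap.map_smul, smul_eq_mul, mul_comm]
  have hintW : ∀ i : Fin d, Integrable (fun ω => fderiv ℝ φ (X t ω) (e i) * X' t ω i) P := by
    intro i
    have hWi : Integrable (fun ω => X' t ω i) P := by simpa using ((EuclideanSpace.proj i : EuclideanSpace ℝ (Fin d) →L[ℝ] ℝ).integrable_comp hX'int)
    refine hWi.bdd_mul (c := C) ?_ ?_
    · exact (((hφ.continuous_fderiv (by simp)).clm_apply continuous_const).measurable.comp
        (hXmeas t)).aestronglyMeasurable
    · refine Filter.Eventually.of_forall fun ω => ?_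
      calc ‖fderiv ℝ φ (X t ω) (e i)‖ ≤ ‖fderiv ℝ φ (X t ω)‖ * ‖e i‖ :=
            (fderiv ℝ φ (X t ω)).le_opNorm _
        _ = ‖fderiv ℝ φ (X t ω)‖ := by rw [he]; simp [EuclideanSpace.norm_single]
        _ ≤ C := hC _
  have hintC : ∀ i : Fin d, Integrable (fun ω => fderiv ℝ φ (X t ω) (e i) * v t (X t ω) i) P := by
    intro i
    have hCi : Integrable (fun ω => v t (X t ω) i) P :=
      by simpa using ((EuclideanSpace.proj i : EuclideanSpace ℝ (Fin d) →L[ℝ] ℝ).integrable_comp hCint)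
    refine hCi.bdd_mul (c := C) ?_ ?_
    · exact (((hφ.continuous_fderiv (by simp)).clm_apply continuous_const).measurable.comp
        (hXmeas t)).aestronglyMeasurable
    · refine Filter.Eventually.of_forall fun ω => ?_
      calc ‖fderiv ℝ φ (X t ω) (e i)‖ ≤ ‖fderiv ℝ φ (X t ω)‖ * ‖e i‖ :=
            (fderiv ℝ φ (X t ω)).le_opNorm _
        _ = ‖fderiv ℝ φ (X t ω)‖ := by rw [he]; simp [EuclideanSpace.norm_single]
        _ ≤ C := hC _
  calc ∫ ω, fderiv ℝ φ (X t ω) (X' t ω) ∂P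
      = ∫ ω, ∑ i, fderiv ℝ φ (X t ω) (e i) * X' t ω i ∂P :=
        integral_congr_ae (Filter.Eventually.of_forall fun ω => expand _ _)
    _ = ∑ i, ∫ ω, fderiv ℝ φ (X t ω) (e i) * X' t ω i ∂P :=
        integral_finset_sum _ fun i _ => hintW i
    _ = ∑ i, ∫ ω, fderiv ℝ φ (X t ω) (e i) * v t (X t ω) i ∂P :=
        Finset.sum_congr rfl fun i _ => hmul i
    _ = ∫ ω, ∑ i, fderiv ℝ φ (X t ω) (e i) * v t (X t ω) i ∂P :=
        (integral_finset_sum _ fun i _ => hintC i).symm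
    _ = ∫ ω, fderiv ℝ φ (X t ω) (v t (X t ω)) ∂P :=
        (integral_congr_ae (Filter.Eventually.of_forall fun ω => expand _ _)).symm
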